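/- arXiv:1710.05960 — 4 statements merged into one kernel-verified Lean document; each statement's English description precedes it below -/
import Mathlib

section
/- For all integers n ≥ 0 and r ≥ 1, the sum over k ≥ 0 of p(n - r·k(k+1)/2) equals S_r(n), the sum of the least r-gaps over all partitions of n. (Terms with negative argument are zero.) -/
open scoped Classical

/-- `pI m` is the number of partitions of `m`, with `pI m = 0` for `m < 0`. -/
noncomputable def pI (m : ℤ) : ℕ := if 0 ≤ m then Nat.card (Nat.Partition m.toNat) else 0

/-- The `k`-th triangular number. -/
def T (k : ℕ) : ℕ := k * (k + 1) / 2

/-- The least `r`-gap of a partition: the smallest positive integer appearing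
fewer than `r` times as a part; `gap 0 = ⊤` by convention. -/
noncomputable def gap (r : ℕ) {n : ℕ} (lam : Nat.Partition n) : ℕ∞ :=
  if r = 0 then ⊤ else (sInf {i : ℕ | 0 < i ∧ lam.parts.count i < r} : ℕ)

/-- `S r n` is the sum of the least `r`-gaps over all partitions of `n`. -/
noncomputable def S (r n : ℕ) : ℕ := ∑ lam : Nat.Partition n, (gap r lam).toNat

/-- `G r n` is the number of partitions `lam` of `n` with `gap r lam < gap (r-1) lam`. -/
noncomputable def G (r n : ℕ) : ℕ :=
  Nat.card {lam : Nat.Partition n // gap r lam < gap (r-1) lam}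

/-- `U r n` is the number of partitions of `n` into parts not congruent to
`0`, `r`, or `3r` modulo `4r`. -/
noncomputable def U (r n : ℕ) : ℕ :=
  Nat.card {lam : Nat.Partition n //
    ∀ i ∈ lam.parts, i % (4*r) ≠ 0 ∧ i % (4*r) ≠ r % (4*r) ∧ i % (4*r) ≠ (3*r) % (4*r)}

/-- `qD m` is the number of partitions of `m` into distinct parts. -/
noncomputable def qD (m : ℕ) : ℕ := Nat.card {lam : Nat.Partition m // lam.parts.Nodup}

/-- `pe n` is the number of partitions of `n` into an even number of parts. -/
noncomputable def pe (n : ℕ) : ℕ :=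
  Nat.card {lam : Nat.Partition n // Even (Multiset.card lam.parts)}

/-- `R n` is the number of partitions of `n` with nonnegative rank
(largest part minus number of parts is `≥ 0`). -/
noncomputable def R (n : ℕ) : ℕ :=
  Nat.card {lam : Nat.Partition n // (Multiset.card lam.parts : ℤ) ≤ (lam.parts.sup : ℤ)}

/-- The crank of a partition. -/
noncomputable def crank {n : ℕ} (lam : Nat.Partition n) : ℤ :=
  if lam.parts.count 1 = 0 then (lam.parts.sup : ℤ)
  else (Multiset.card (lam.parts.filter (fun x => lam.parts.count 1 < x)) : ℤ)
        - lam.parts.count 1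

/-- `C n` is the number of partitions of `n` with nonnegative crank. -/
noncomputable def C (n : ℕ) : ℕ := Nat.card {lam : Nat.Partition n // 0 ≤ crank lam}

/-- The multiset consisting of `r` copies of each of `1, …, k`. -/
def Dm (r k : ℕ) : Multiset ℕ := ∑ i ∈ Finset.Icc 1 k, Multiset.replicate r i

lemma two_T (k : ℕ) : 2 * T k = k * (k + 1) := by
  have h := Nat.even_mul_succ_self k
  rw [T, Nat.mul_div_cancel' h.two_dvd]

lemma T_succ (k : ℕ) : T (k + 1) = T k + (k + 1) := by
  have h1 := two_T k
  have h2 := two_T (k + 1)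
  have h3 : (k + 1) * (k + 1 + 1) = k * (k + 1) + 2 * (k + 1) := by ring
  omega

lemma k_le_T (k : ℕ) : k ≤ T k := by
  induction k with
  | zero => simp
  | succ k ih => rw [T_succ]; omega

lemma count_Dm (r k a : ℕ) :
    (Dm r k).count a = if a ∈ Finset.Icc 1 k then r else 0 := by
  classical
  rw [Dm, Multiset.count_sum']
  simp only [Multiset.count_replicate]
  exact Finset.sum_ite_eq' _ _ _

lemma sum_Dm (r k : ℕ) : (Dm r k).sum = r * T k := by
  induction k with
  | zero => simp [Dm, T]
  | succ k ih =>
    rw [Dm, Finset.sum_Icc_succ_top (by omega : 1 ≤ k + 1)]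
    rw [Multiset.sum_add, ← Dm, ih, Multiset.sum_replicate, T_succ, smul_eq_mul]
    ring

lemma mem_Dm_pos (r k a : ℕ) (h : a ∈ Dm r k) : 0 < a := by
  rw [Dm, Multiset.mem_sum] at h
  obtain ⟨i, hi, hmem⟩ := h
  rw [Multiset.eq_of_mem_replicate hmem]
  exact (Finset.mem_Icc.mp hi).1

/-- The least `r`-gap as a natural number. -/
noncomputable def gfun (r : ℕ) {n : ℕ} (lam : Nat.Partition n) : ℕ :=
  sInf {i : ℕ | 0 < i ∧ lam.parts.count i < r}

lemma gap_toNat (r : ℕ) {n : ℕ} (hr : 1 ≤ r) (lam : Nat.Partition n) :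
    (gap r lam).toNat = gfun r lam := by
  rw [gap, gfun, if_neg (by omega)]
  rfl

lemma succ_mem_gapset {n : ℕ} (r : ℕ) (hr : 1 ≤ r) (lam : Nat.Partition n) :
    (n + 1) ∈ {i : ℕ | 0 < i ∧ lam.parts.count i < r} := by
  refine ⟨by omega, ?_⟩
  have hc : lam.parts.count (n + 1) = 0 := by
    rw [Multiset.count_eq_zero]
    intro hmem
    have := Multiset.single_le_sum (fun x _ => Nat.zero_le x) _ hmem
    rw [lam.parts_sum] at this
    omega
  omega

lemma gfun_le {n : ℕ} (r : ℕ) (hr : 1 ≤ r) (lam : Nat.Partition n) :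
    gfun r lam ≤ n + 1 :=
  Nat.sInf_le (succ_mem_gapset r hr lam)

lemma lt_gfun_iff {n : ℕ} (r k : ℕ) (hr : 1 ≤ r) (lam : Nat.Partition n) :
    k < gfun r lam ↔ Dm r k ≤ lam.parts := by
  constructor
  · intro h
    rw [Multiset.le_iff_count]
    intro a
    rw [count_Dm]
    by_cases ha : a ∈ Finset.Icc 1 k
    · rw [if_pos ha]
      obtain ⟨ha1, ha2⟩ := Finset.mem_Icc.mp ha
      by_contra hcount
      have hmem : a ∈ {i : ℕ | 0 < i ∧ lam.parts.count i < r} := ⟨by omega, by omega⟩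
      have := Nat.sInf_le hmem
      rw [gfun] at h
      omega
    · rw [if_neg ha]; exact Nat.zero_le _
  · intro h
    by_contra hk
    push_neg at hk
    have hne : {i : ℕ | 0 < i ∧ lam.parts.count i < r}.Nonempty :=
      ⟨n + 1, succ_mem_gapset r hr lam⟩
    have hmem := Nat.sInf_mem hne
    set g := sInf {i : ℕ | 0 < i ∧ lam.parts.count i < r} with hg
    obtain ⟨hg1, hg2⟩ := hmem
    have hgIcc : g ∈ Finset.Icc 1 k := Finset.mem_Icc.mpr ⟨by omega, by
      rw [gfun] at hk; omega⟩
    have := Multiset.le_iff_count.mp h g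
    rw [count_Dm, if_pos hgIcc] at this
    omega

lemma card_Dm_le (n r k : ℕ) :
    Nat.card {lam : Nat.Partition n // Dm r k ≤ lam.parts} = pI ((n : ℤ) - r * T k) := by
  classical
  by_cases h : r * T k ≤ n
  · -- build an equivalence with partitions of `n - r * T k`
    have hcast : (n : ℤ) - r * T k = ((n - r * T k : ℕ) : ℤ) := by omega
    rw [hcast, pI, if_pos (Int.natCast_nonneg _), Int.toNat_natCast]
    refine Nat.card_congr ?_
    refine
      { toFun := fun p => ⟨p.1.parts - Dm r k, ?_, ?_⟩
        invFun := fun mu => ⟨⟨mu.parts + Dm r k, ?_, ?_⟩, Multiset.le_add_left _ _⟩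
        left_inv := ?_
        right_inv := ?_ }
    · intro i hi
      exact p.1.parts_pos (Multiset.mem_of_le (Multiset.sub_le_self _ _) hi)
    · have h2 : p.1.parts - Dm r k + Dm r k = p.1.parts := tsub_add_cancel_of_le p.2
      have h3 := congrArg Multiset.sum h2
      rw [Multiset.sum_add, p.1.parts_sum, sum_Dm] at h3
      omega
    · intro i hi
      rcases Multiset.mem_add.mp hi with hi | hi
      · exact mu.parts_pos hi
      · exact mem_Dm_pos r k i hi
    · rw [Multiset.sum_add, mu.parts_sum, sum_Dm]
      omega
    · intro p
      apply Subtype.ext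
      apply Nat.Partition.ext
      exact tsub_add_cancel_of_le p.2
    · intro mu
      apply Nat.Partition.ext
      exact add_tsub_cancel_right _ _
  · -- both sides are zero
    have hempty : IsEmpty {lam : Nat.Partition n // Dm r k ≤ lam.parts} := by
      refine ⟨fun p => ?_⟩
      have h2 : Dm r k + (p.1.parts - Dm r k) = p.1.parts := add_tsub_cancel_of_le p.2
      have h3 := congrArg Multiset.sum h2
      rw [Multiset.sum_add, p.1.parts_sum, sum_Dm] at h3
      omega
    rw [Nat.card_of_isEmpty, pI, if_neg (by omega)]

theorem stmt0 (n r : ℕ) (hr : 1 ≤ r) :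
    ∑' k : ℕ, pI ((n : ℤ) - r * T k) = S r n := by
  classical
  -- the series is a finite sum over `k ∈ range (n+1)`
  have htsum : ∑' k : ℕ, pI ((n : ℤ) - r * T k)
      = ∑ k ∈ Finset.range (n + 1), pI ((n : ℤ) - r * T k) := by
    refine tsum_eq_sum ?_
    intro k hk
    rw [Finset.mem_range, not_lt] at hk
    have h1 : n + 1 ≤ T k := le_trans hk (k_le_T k)
    have h2 : n + 1 ≤ r * T k := le_trans h1 (Nat.le_mul_of_pos_left _ (by omega))
    rw [pI, if_neg (by omega)]
  rw [htsum]
  -- rewrite `S` as a double sum and swap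
  have hS : S r n = ∑ k ∈ Finset.range (n + 1),
      Nat.card {lam : Nat.Partition n // k < gfun r lam} := by
    rw [S]
    have key : ∀ lam : Nat.Partition n, (gap r lam).toNat
        = ∑ k ∈ Finset.range (n + 1), (if k < gfun r lam then 1 else 0) := by
      intro lam
      rw [gap_toNat r hr lam]
      have hle := gfun_le r hr lam
      rw [Finset.sum_boole]
      have hfilter : (Finset.range (n + 1)).filter (fun k => k < gfun r lam)
          = Finset.range (gfun r lam) := by
        ext a
        simp only [Finset.mem_filter, Finset.mem_range]
        omega
      rw [hfilter, Finset.card_range, Nat.cast_id]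
    calc ∑ lam : Nat.Partition n, (gap r lam).toNat
        = ∑ lam : Nat.Partition n, ∑ k ∈ Finset.range (n + 1),
            (if k < gfun r lam then 1 else 0) := Finset.sum_congr rfl fun lam _ => key lam
      _ = ∑ k ∈ Finset.range (n + 1), ∑ lam : Nat.Partition n,
            (if k < gfun r lam then 1 else 0) := Finset.sum_comm
      _ = ∑ k ∈ Finset.range (n + 1),
            Nat.card {lam : Nat.Partition n // k < gfun r lam} := by
          refine Finset.sum_congr rfl fun k _ => ?_
          rw [Nat.card_eq_fintype_card, Fintype.card_subtype, Finset.sum_boole, Nat.cast_id]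
  rw [hS]
  refine Finset.sum_congr rfl fun k _ => ?_
  rw [← card_Dm_le n r k]
  exact Nat.card_congr (Equiv.subtypeEquivRight fun lam => lt_gfun_iff r k hr lam) |>.symm
end

section
/- For fixed r ≥ 1, n ≥ 0, and k ≥ 0, the number of partitions λ of n satisfying g_r(λ) > k equals p(n - r·T_k), where T_k = k(k+1)/2. -/
open scoped Classical

/-- r copies of each of 1..k -/
def EE (r k : ℕ) : Multiset ℕ := (Finset.Icc 1 k).val.bind (fun i => Multiset.replicate r i)

lemma EE_count (r k i : ℕ) :
    (EE r k).count i = if i ∈ Finset.Icc 1 k then r else 0 := by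
  rw [EE, Multiset.count_bind]
  change (∑ j ∈ Finset.Icc 1 k, Multiset.count i (Multiset.replicate r j)) = _
  simp [Multiset.count_replicate, Finset.sum_ite_eq]

lemma EE_sum (r k : ℕ) : (EE r k).sum = r * T k := by
  rw [EE, Multiset.bind, Multiset.sum_join]
  rw [Multiset.map_map]
  change (∑ j ∈ Finset.Icc 1 k, (Multiset.replicate r j).sum) = _
  simp only [Multiset.sum_replicate, smul_eq_mul]
  rw [← Finset.mul_sum, T]
  have h : (∑ j ∈ Finset.Icc 1 k, j) * 2 = k * (k + 1) := by
    induction k with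
    | zero => simp
    | succ m ih =>
      rw [Finset.sum_Icc_succ_top (by omega)]
      have hm : (m + 1) * (m + 1 + 1) = m * (m + 1) + 2 * (m + 1) := by ring
      omega
  have h2 : (∑ j ∈ Finset.Icc 1 k, j) = k * (k + 1) / 2 := by omega
  rw [h2]

lemma EE_pos {r k i : ℕ} (h : i ∈ EE r k) : 0 < i := by
  rw [EE, Multiset.mem_bind] at h
  obtain ⟨a, ha, hi⟩ := h
  rw [Multiset.eq_of_mem_replicate hi]
  simp at ha; omega

lemma gap_gt_iff {r n k : ℕ} (hr : 1 ≤ r) (lam : Nat.Partition n) :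
    (k : ℕ∞) < gap r lam ↔ EE r k ≤ lam.parts := by
  rw [gap, if_neg (by omega), Nat.cast_lt]
  set A := {i : ℕ | 0 < i ∧ lam.parts.count i < r} with hA
  have hne : A.Nonempty := by
    refine ⟨n + 1, by omega, ?_⟩
    have : n + 1 ∉ lam.parts := by
      intro h
      have := Multiset.single_le_sum (fun x _ => Nat.zero_le x) _ h
      rw [lam.parts_sum] at this; omega
    rw [Multiset.count_eq_zero_of_notMem this]; omega
  rw [Multiset.le_iff_count]
  constructor
  · intro hk i
    rw [EE_count]
    split_ifs with hi
    · simp only [Finset.mem_Icc] at hi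
      by_contra hlt
      have : i ∈ A := ⟨by omega, by omega⟩
      have := Nat.sInf_le this
      omega
    · omega
  · intro h
    by_contra hk
    have hmem := Nat.sInf_mem hne
    have h2 := h (sInf A)
    rw [EE_count, if_pos (by simp only [Finset.mem_Icc]; exact ⟨hmem.1, by omega⟩)] at h2
    exact absurd h2 (by have := hmem.2; omega)

theorem stmt1 (r n k : ℕ) (hr : 1 ≤ r) :
    Nat.card {lam : Nat.Partition n // (k : ℕ∞) < gap r lam} = pI ((n : ℤ) - r * T k) := by
  by_cases hn : r * T k ≤ n
  · have hcast : ((n : ℤ) - r * T k) = ((n - r * T k : ℕ) : ℤ) := by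
      omega
    rw [hcast, pI, if_pos (Int.natCast_nonneg _), Int.toNat_natCast]
    apply Nat.card_eq_of_bijective _ (Equiv.bijective _)
    exact
    { toFun := fun lam =>
        { parts := lam.1.parts - EE r k
          parts_pos := fun {i} hi => lam.1.parts_pos
            (Multiset.mem_of_le (Multiset.sub_le_self _ _) hi)
          parts_sum := by
            have hle := (gap_gt_iff hr lam.1).1 lam.2
            have h1 : lam.1.parts - EE r k + EE r k = lam.1.parts :=
              tsub_add_cancel_of_le hle
            have h2 := congrArg Multiset.sum h1
            rw [Multiset.sum_add, lam.1.parts_sum, EE_sum] at h2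
            omega }
      invFun := fun mu =>
        ⟨{ parts := mu.parts + EE r k
           parts_pos := fun {i} hi => by
             rcases Multiset.mem_add.1 hi with h | h
             · exact mu.parts_pos h
             · exact EE_pos h
           parts_sum := by
             rw [Multiset.sum_add, mu.parts_sum, EE_sum]; omega },
         by
          rw [gap_gt_iff hr]
          exact Multiset.le_add_left _ _⟩
      left_inv := fun lam => by
        apply Subtype.ext
        apply Nat.Partition.ext
        exact tsub_add_cancel_of_le ((gap_gt_iff hr lam.1).1 lam.2)
      right_inv := fun mu => by
        apply Nat.Partition.ext
        simp }
  · have h1 : {lam : Nat.Partition n // (k : ℕ∞) < gap r lam} → False := by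
      rintro ⟨lam, hlam⟩
      have hle := (gap_gt_iff hr lam).1 hlam
      have h1 : lam.parts - EE r k + EE r k = lam.parts := tsub_add_cancel_of_le hle
      have h2 := congrArg Multiset.sum h1
      rw [Multiset.sum_add, lam.parts_sum, EE_sum] at h2
      omega
    rw [Nat.card_eq_zero.mpr (Or.inl ⟨h1⟩), pI, if_neg (by omega)]
end

section
/- For all n ≥ 0 and r ≥ 1, Σ_{k≥0} p(n - P(r+2, -k)) = S_r(n) + G_r(n), where P(s, m) = (m²(s-2) - m(s-4))/2, so that P(r+2, -k) = r·k(k+1)/2 - k. -/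
/-!
A partition `λ` of `n` contains the multiset `stair r k` (the parts `1, …, k - 1` each `r` times
and `k` itself `r - 1` times) exactly when `k < g_r(λ)`, or `k = g_r(λ)` and `g_r(λ)` occurs
`r - 1` times, the latter being the condition `g_r(λ) < g_{r-1}(λ)`. Hence `λ` contains
`g_r(λ) + [g_r(λ) < g_{r-1}(λ)]` of these multisets. On the other hand, deleting `stair r k` is a
bijection from the partitions of `n` containing it onto the partitions of `n - P(r + 2, -k)`.
Counting the pairs `(λ, k)` in both ways gives the identity.
-/

open scoped Classical

open Finset

noncomputable def leastGap (r : ℕ) (s : Multiset ℕ) : ℕ := sInf {i | 0 < i ∧ s.count i < r}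

section LeastGap

variable {r : ℕ} {s : Multiset ℕ}

lemma exists_pos_count_lt (hr : r ≠ 0) (s : Multiset ℕ) : ∃ i, 0 < i ∧ s.count i < r := by
  refine ⟨s.sup + 1, Nat.succ_pos _, ?_⟩
  rw [Multiset.count_eq_zero.mpr fun h => by have := Multiset.le_sup h; omega]
  exact Nat.pos_of_ne_zero hr

lemma leastGap_pos (hr : r ≠ 0) : 0 < leastGap r s :=
  (Nat.sInf_mem (exists_pos_count_lt hr s)).1

lemma count_leastGap_lt (hr : r ≠ 0) : s.count (leastGap r s) < r :=
  (Nat.sInf_mem (exists_pos_count_lt hr s)).2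

lemma leastGap_le {i : ℕ} (hi : 0 < i) (hs : s.count i < r) : leastGap r s ≤ i :=
  Nat.sInf_le ⟨hi, hs⟩

lemma lt_leastGap_iff (hr : r ≠ 0) {j : ℕ} :
    j < leastGap r s ↔ ∀ i, 0 < i → i ≤ j → r ≤ s.count i := by
  refine ⟨fun hj i hi hij => ?_, fun h => ?_⟩
  · by_contra! hs
    exact absurd (leastGap_le hi hs) (by omega)
  · by_contra! hj
    exact absurd (h _ (leastGap_pos hr) hj) (not_le.mpr (count_leastGap_lt hr))

lemma leastGap_succ_lt_leastGap_iff (hr : r ≠ 0) :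
    leastGap (r + 1) s < leastGap r s ↔ r ≤ s.count (leastGap (r + 1) s) := by
  refine ⟨fun h => ?_, fun h => (lt_leastGap_iff hr).2 fun i hi hij => ?_⟩
  · by_contra! hs
    exact absurd (leastGap_le (leastGap_pos r.succ_ne_zero) hs) (not_le.mpr h)
  · rcases hij.lt_or_eq with hlt | rfl
    · exact ((lt_leastGap_iff r.succ_ne_zero).1 hlt i hi le_rfl).trans' (Nat.le_succ r)
    · exact h

end LeastGap

def stair (r k : ℕ) : Multiset ℕ := r • Multiset.Icc 1 k - {k}

section Stair

variable {r k : ℕ}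

lemma pos_of_mem_stair {i : ℕ} (hi : i ∈ stair r k) : 0 < i := by
  have := Multiset.mem_of_le (Multiset.sub_le_self _ _) hi
  rw [Multiset.mem_nsmul, Multiset.mem_Icc] at this
  omega

lemma count_stair (i : ℕ) :
    (stair r k).count i = (if 1 ≤ i ∧ i ≤ k then r else 0) - if i = k then 1 else 0 := by
  simp only [stair, Multiset.count_sub, Multiset.count_nsmul,
    Multiset.count_eq_of_nodup Multiset.nodup_Icc, Multiset.count_singleton, Multiset.mem_Icc]
  split_ifs <;> simp

lemma stair_le_iff (hr : r ≠ 0) {s : Multiset ℕ} :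
    stair r k ≤ s ↔
      k < leastGap r s ∨ (k = leastGap r s ∧ r - 1 ≤ s.count (leastGap r s)) := by
  have hpos := leastGap_pos (s := s) hr
  simp only [Multiset.le_iff_count, count_stair]
  constructor
  · intro h
    have hk : k - 1 < leastGap r s := (lt_leastGap_iff hr).2 fun i hi hik => by
      have := h i
      rw [if_pos ⟨hi, by omega⟩, if_neg (by omega)] at this
      omega
    rcases (show k < leastGap r s ∨ k = leastGap r s by omega) with hlt | heq
    · exact Or.inl hlt
    · refine Or.inr ⟨heq, heq ▸ ?_⟩
      have := h k
      rwa [if_pos ⟨by omega, le_rfl⟩, if_pos rfl] at this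
  · intro h i
    have below : i < k → 0 < i → r ≤ s.count i := fun hik hi =>
      (lt_leastGap_iff hr).1 (show i < leastGap r s by omega) i hi le_rfl
    split_ifs with hi hik <;> try omega
    subst hik
    rcases h with hlt | ⟨hk, hc⟩
    · have := (lt_leastGap_iff hr).1 hlt i hi.1 le_rfl
      omega
    · rwa [hk]

lemma two_mul_sum_Icc_one (k : ℕ) : 2 * (Multiset.Icc 1 k).sum = k * (k + 1) := by
  rw [Multiset.Icc, Finset.sum_val]
  induction k with
  | zero => rfl
  | succ k ih => rw [Finset.sum_Icc_succ_top (by omega), mul_add, ih, id]; ring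

lemma sum_stair (hr : r ≠ 0) : ((stair r k).sum : ℤ) = r * (k * (k + 1) / 2) - k := by
  rcases Nat.eq_zero_or_pos k with rfl | hk
  · simp [stair]
  have hle : {k} ≤ r • Multiset.Icc 1 k := by
    rw [Multiset.singleton_le, Multiset.mem_nsmul_of_ne_zero hr, Multiset.mem_Icc]
    omega
  have hsum : (stair r k).sum + k = r * (Multiset.Icc 1 k).sum := by
    have := congrArg Multiset.sum (tsub_add_cancel_of_le hle)
    rwa [Multiset.sum_add, Multiset.sum_singleton, Multiset.sum_nsmul, smul_eq_mul] at this
  have htri : (k * (k + 1) / 2 : ℤ) = (Multiset.Icc 1 k).sum := by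
    rw [← Int.mul_ediv_cancel_left ((Multiset.Icc 1 k).sum : ℤ) two_ne_zero]
    exact_mod_cast congrArg (· / 2) (two_mul_sum_Icc_one k).symm
  rw [htri]
  linarith [(by exact_mod_cast hsum : ((stair r k).sum : ℤ) + k = r * (Multiset.Icc 1 k).sum)]

end Stair

section Partition

variable {n : ℕ}

def partitionsAboveEquiv (μ : Multiset ℕ) (hμ : ∀ i ∈ μ, 0 < i) (hn : μ.sum ≤ n) :
    {lam : n.Partition // μ ≤ lam.parts} ≃ (n - μ.sum).Partition where
  toFun lam :=
    { parts := lam.1.parts - μ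
      parts_pos := fun hi => lam.1.parts_pos (Multiset.mem_of_le (Multiset.sub_le_self _ _) hi)
      parts_sum := by
        have := congrArg Multiset.sum (tsub_add_cancel_of_le lam.2)
        rw [Multiset.sum_add, lam.1.parts_sum] at this
        omega }
  invFun nu :=
    ⟨{ parts := nu.parts + μ
       parts_pos := fun hi => (Multiset.mem_add.1 hi).elim nu.parts_pos (hμ _)
       parts_sum := by rw [Multiset.sum_add, nu.parts_sum]; omega },
     Multiset.le_add_left _ _⟩
  left_inv lam := Subtype.ext <| Nat.Partition.ext <| tsub_add_cancel_of_le lam.2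
  right_inv nu := Nat.Partition.ext <| add_tsub_cancel_right _ _

lemma card_filter_le_parts (μ : Multiset ℕ) (hμ : ∀ i ∈ μ, 0 < i) :
    #{lam : n.Partition | μ ≤ lam.parts} = pI (n - μ.sum) := by
  rw [← Fintype.card_subtype]
  by_cases hn : μ.sum ≤ n
  · rw [pI, if_pos (by omega), show (n - μ.sum : ℤ).toNat = n - μ.sum by omega,
      Fintype.card_congr (partitionsAboveEquiv μ hμ hn), Nat.card_eq_fintype_card]
  · rw [pI, if_neg (by omega), Fintype.card_eq_zero_iff]
    refine ⟨fun lam => hn ?_⟩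
    obtain ⟨t, ht⟩ := Multiset.le_iff_exists_add.1 lam.2
    have := lam.1.parts_sum
    rw [ht, Multiset.sum_add] at this
    omega

lemma leastGap_parts_le {r : ℕ} (hr : r ≠ 0) (lam : n.Partition) :
    leastGap r lam.parts ≤ n + 1 :=
  leastGap_le n.succ_pos <| by
    rw [Multiset.count_eq_zero.2 fun h => by have := lam.le_of_mem_parts h; omega]
    exact Nat.pos_of_ne_zero hr

lemma gap_eq_leastGap {r : ℕ} (hr : r ≠ 0) (lam : n.Partition) :
    gap r lam = leastGap r lam.parts := by
  rw [gap, if_neg hr, leastGap]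

lemma gap_lt_gap_sub_one_iff {r : ℕ} (hr : r ≠ 0) (lam : n.Partition) :
    gap r lam < gap (r - 1) lam ↔ r - 1 ≤ lam.parts.count (leastGap r lam.parts) := by
  obtain ⟨m, rfl⟩ := Nat.exists_eq_succ_of_ne_zero hr
  rcases eq_or_ne m 0 with rfl | hm
  · simp [gap]
  · rw [Nat.succ_sub_one, gap_eq_leastGap hr, gap_eq_leastGap hm, Nat.cast_lt]
    exact leastGap_succ_lt_leastGap_iff hm

end Partition

lemma card_filter_range_lt_or_eq {g m : ℕ} (hg : g < m) (P : Prop) [Decidable P] :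
    #{k ∈ range m | k < g ∨ k = g ∧ P} = g + if P then 1 else 0 := by
  rw [← card_range (g + if P then 1 else 0)]
  congr 1
  ext k
  simp only [mem_filter, mem_range]
  split_ifs <;> simp [*] <;> omega

theorem stmt9 (n r : ℕ) (hr : 1 ≤ r) :
    ∑' k : ℕ, pI ((n : ℤ) - ((r : ℤ) * ((k : ℤ) * (k + 1) / 2) - k))
      = S r n + G r n := by
  have hr0 : r ≠ 0 := by omega
  have hgap (lam : n.Partition) : leastGap r lam.parts < n + 2 :=
    Nat.lt_succ_of_le (leastGap_parts_le hr0 lam)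
  calc ∑' k : ℕ, pI ((n : ℤ) - ((r : ℤ) * ((k : ℤ) * (k + 1) / 2) - k))
      = ∑' k, #{lam : n.Partition | stair r k ≤ lam.parts} := by
        simp_rw [card_filter_le_parts _ fun _ => pos_of_mem_stair, sum_stair hr0]
    _ = ∑ k ∈ range (n + 2), #{lam : n.Partition | stair r k ≤ lam.parts} := by
        refine tsum_eq_sum fun k hk => card_eq_zero.2 <| filter_eq_empty_iff.2 fun lam _ h => ?_
        rw [mem_range] at hk
        have := hgap lam
        rw [stair_le_iff hr0] at h
        omega
    _ = ∑ lam : n.Partition, #{k ∈ range (n + 2) | stair r k ≤ lam.parts} := by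
        simp_rw [card_filter]
        exact sum_comm
    _ = ∑ lam : n.Partition, (leastGap r lam.parts +
          if r - 1 ≤ lam.parts.count (leastGap r lam.parts) then 1 else 0) := by
        refine sum_congr rfl fun lam _ => ?_
        simp_rw [stair_le_iff hr0]
        exact card_filter_range_lt_or_eq (hgap lam) _
    _ = S r n + G r n := by
        rw [sum_add_distrib, S, G, Nat.card_eq_fintype_card, Fintype.card_subtype, card_filter]
        simp_rw [gap_lt_gap_sub_one_iff hr0, gap_eq_leastGap hr0, ENat.toNat_natCast]
end

section
/- For fixed r ≥ 1, n ≥ 0, and k ≥ 0, p(n - (r·k(k+1)/2 - k)) equals the number of partitions λ of n satisfying g_r(λ) ≥ k and g_{r-1}(λ) > k. -/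
open scoped Classical

/-!
The conditions `k ≤ g_r(λ)` and `k < g_{r-1}(λ)` say that each of `1, …, k-1` occurs at least `r`
times in `λ` and `k` at least `r - 1` times, i.e. that `λ` contains the multiset
`1^r 2^r ⋯ (k-1)^r k^(r-1)` of total size `r·k(k+1)/2 - k`. Removing these parts is a bijection
onto the partitions of `n - (r·k(k+1)/2 - k)`, and there are none when this is negative.
-/

namespace Nat.Partition

def partitionWithPartsEquiv {n : ℕ} {M : Multiset ℕ} (hM : ∀ i ∈ M, 0 < i) (h : M.sum ≤ n) :
    {p : n.Partition // M ≤ p.parts} ≃ (n - M.sum).Partition where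
  toFun p := by
    refine ⟨p.1.parts - M, fun hi => p.1.parts_pos (Multiset.mem_of_le tsub_le_self hi), ?_⟩
    have hs := congrArg Multiset.sum (tsub_add_cancel_of_le p.2)
    rw [Multiset.sum_add, p.1.parts_sum] at hs
    lia
  invFun q := ⟨⟨q.parts + M, by grind, by simp [q.parts_sum, h]⟩, by simp⟩
  left_inv p := Subtype.ext <| Partition.ext <| tsub_add_cancel_of_le p.2
  right_inv q := Partition.ext <| add_tsub_cancel_right q.parts M

theorem card_subtype_le_parts {M : Multiset ℕ} (hM : ∀ i ∈ M, 0 < i) (n : ℕ) :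
    Nat.card {p : n.Partition // M ≤ p.parts} = pI (n - M.sum) := by
  rcases le_or_gt M.sum n with h | h
  · rw [Nat.card_congr (partitionWithPartsEquiv hM h), pI, if_pos (by lia)]
    congr
    lia
  · have : IsEmpty {p : n.Partition // M ≤ p.parts} :=
      ⟨fun p => by
        obtain ⟨u, hu⟩ := Multiset.le_iff_exists_add.mp p.2
        have hs := p.1.parts_sum
        rw [hu, Multiset.sum_add] at hs
        lia⟩
    rw [Nat.card_of_isEmpty, pI, if_neg (by lia)]

end Nat.Partition

def staircase (r k : ℕ) : Multiset ℕ := (r • Multiset.Icc 1 k).erase k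

theorem pos_of_mem_staircase {r k i : ℕ} (h : i ∈ staircase r k) : 0 < i := by
  have := Multiset.mem_of_mem_erase h
  simp only [Multiset.mem_nsmul, Multiset.mem_Icc] at this
  lia

theorem count_staircase (r k j : ℕ) :
    (staircase r k).count j = (if 1 ≤ j ∧ j ≤ k then r else 0) - if j = k then 1 else 0 := by
  rcases eq_or_ne j k with rfl | hjk
  · simp [staircase, Multiset.count_erase_self, Multiset.count_nsmul,
      Multiset.count_eq_of_nodup Multiset.nodup_Icc]
  · simp [staircase, Multiset.count_erase_of_ne hjk, Multiset.count_nsmul,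
      Multiset.count_eq_of_nodup Multiset.nodup_Icc, hjk]

theorem staircase_le_iff (r k : ℕ) (s : Multiset ℕ) :
    staircase r k ≤ s ↔
      (∀ j, 0 < j → j < k → r ≤ s.count j) ∧ (∀ j, 0 < j → j ≤ k → r - 1 ≤ s.count j) := by
  simp only [Multiset.le_iff_count, count_staircase]
  constructor
  · intro h
    exact ⟨fun j _ _ => by grind, fun j _ _ => by grind⟩
  · rintro ⟨hlt, hle⟩ j
    grind

theorem sum_staircase {r : ℕ} (hr : 1 ≤ r) (k : ℕ) :
    ((staircase r k).sum : ℤ) = r * ((k : ℤ) * (k + 1) / 2) - k := by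
  have hgauss : ((Multiset.Icc 1 k).sum : ℤ) = (k : ℤ) * (k + 1) / 2 := by
    change (((Finset.Icc 1 k).val.sum : ℕ) : ℤ) = _
    rw [Finset.sum_val]
    refine (Int.ediv_eq_of_eq_mul_left two_ne_zero ?_).symm
    induction k with
    | zero => simp
    | succ k ih =>
      rw [Finset.sum_Icc_succ_top (by lia)]
      push_cast [id] at ih ⊢
      linear_combination ih
  rcases Nat.eq_zero_or_pos k with rfl | hk
  · simp [staircase]
  have hmem : k ∈ r • Multiset.Icc 1 k := by
    simp only [Multiset.mem_nsmul, Multiset.mem_Icc]; lia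
  have hsum := Multiset.sum_erase hmem
  rw [Multiset.sum_nsmul, smul_eq_mul] at hsum
  rw [staircase, ← hgauss]
  lia

theorem le_gap_iff (r k : ℕ) {n : ℕ} (p : n.Partition) :
    (k : ℕ∞) ≤ gap r p ↔ ∀ j, 0 < j → j < k → r ≤ p.parts.count j := by
  rcases eq_or_ne r 0 with rfl | hr
  · simp [gap]
  have hne : {i : ℕ | 0 < i ∧ p.parts.count i < r}.Nonempty :=
    ⟨n + 1, by simp, by grind [Multiset.count_eq_zero]⟩
  rw [gap, if_neg hr, Nat.cast_le, le_csInf_iff' hne]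
  constructor
  · intro h j hj hjk
    by_contra! hlt
    exact (h ⟨hj, hlt⟩).not_gt hjk
  · rintro h i ⟨hi, hlt⟩
    by_contra! hik
    exact (h i hi hik).not_gt hlt

theorem lt_gap_iff (r k : ℕ) {n : ℕ} (p : n.Partition) :
    (k : ℕ∞) < gap r p ↔ ∀ j, 0 < j → j ≤ k → r ≤ p.parts.count j := by
  rw [← ENat.add_one_le_iff (ENat.natCast_ne_top k), ← Nat.cast_add_one, le_gap_iff]
  simp only [Nat.lt_add_one_iff]

theorem stmt10 (r n k : ℕ) (hr : 1 ≤ r) :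
    pI ((n : ℤ) - ((r : ℤ) * ((k : ℤ) * (k + 1) / 2) - k))
      = Nat.card {lam : Nat.Partition n //
          (k : ℕ∞) ≤ gap r lam ∧ (k : ℕ∞) < gap (r - 1) lam} := by
  have hcond (lam : n.Partition) :
      ((k : ℕ∞) ≤ gap r lam ∧ (k : ℕ∞) < gap (r - 1) lam) ↔ staircase r k ≤ lam.parts := by
    rw [le_gap_iff, lt_gap_iff, staircase_le_iff]
  rw [Nat.card_congr (Equiv.subtypeEquivRight hcond),
    Nat.Partition.card_subtype_le_parts (fun _ => pos_of_mem_staircase), sum_staircase hr]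
end
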